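/- arXiv:2301.00401 — 7 statements merged into one kernel-verified Lean document; each statement's English description precedes it below -/
import Mathlib

section
/- Let s : Fin m → Bool be a finite binary string (where `true` represents a used neon tube and `false` an unused one) containing at least one `true` entry, such that s has no two consecutive `false` entries and no three consecutive entries of the form `false, true, false`. If a denotes the number of `true` entries and b the number of `false` entries, then b ≤ ⌈(a+1)/2⌉, and consequently m = a + b ≤ 2a. -/
/-!
Two unused tubes are always at least three positions apart, so at most `⌈m / 3⌉` of the `m`
tubes are unused: `3 b ≤ a + b + 2`, i.e. `2 b ≤ a + 2`.
-/

open Finset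

/-- Integer division by `k` separates points at distance at least `k`, so it injects such a set
into `range ⌈m / k⌉`. -/
theorem Finset.card_le_of_forall_add_le {S : Finset ℕ} {m k : ℕ} (hk : 0 < k)
    (hS : ∀ x ∈ S, x < m) (hgap : ∀ x ∈ S, ∀ y ∈ S, x < y → x + k ≤ y) :
    #S ≤ (m + k - 1) / k := by
  have div_lt_div_of_add_le {x y : ℕ} (hxy : x + k ≤ y) : x / k < y / k :=
    calc x / k < (x + k) / k := by rw [Nat.add_div_right x hk]; exact Nat.lt_succ_self _
      _ ≤ y / k := Nat.div_le_div_right hxy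
  calc #S ≤ #(range ((m + k - 1) / k)) := by
        refine card_le_card_of_injOn (· / k) (fun x hx => ?_) (fun x hx y hy hxy => ?_)
        · exact mem_range.2 (div_lt_div_of_add_le (by have := hS x hx; omega))
        · by_contra hne
          rcases Nat.lt_or_gt_of_ne hne with h | h
          · exact (div_lt_div_of_add_le (hgap x hx y hy h)).ne hxy
          · exact (div_lt_div_of_add_le (hgap y hy x hx h)).ne' hxy
    _ = (m + k - 1) / k := card_range _

theorem add_three_le_of_eq_false {m : ℕ} {s : Fin m → Bool}
    (h00 : ∀ (i : ℕ) (h1 : i < m) (h2 : i + 1 < m),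
      ¬(s ⟨i, h1⟩ = false ∧ s ⟨i + 1, h2⟩ = false))
    (h010 : ∀ (i : ℕ) (h1 : i < m) (h2 : i + 1 < m) (h3 : i + 2 < m),
      ¬(s ⟨i, h1⟩ = false ∧ s ⟨i + 1, h2⟩ = true ∧ s ⟨i + 2, h3⟩ = false))
    {i j : Fin m} (hi : s i = false) (hj : s j = false) (hij : i < j) : i.1 + 3 ≤ j.1 := by
  obtain ⟨i, hi'⟩ := i
  obtain ⟨j, hj'⟩ := j
  simp only [Fin.mk_lt_mk] at hij ⊢
  by_contra! hji
  obtain rfl | rfl : j = i + 1 ∨ j = i + 2 := by omega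
  · exact h00 i hi' hj' ⟨hi, hj⟩
  · cases hmid : s ⟨i + 1, by omega⟩
    · exact h00 i hi' _ ⟨hi, hmid⟩
    · exact h010 i hi' _ hj' ⟨hi, hmid, hj⟩

/-- Combinatorial core of the Sandwiched Neon Tube argument: a binary string with
at least one `true`, no two consecutive `false`s and no `false,true,false` substring
has at most `⌈(a+1)/2⌉` many `false`s, where `a` is the number of `true`s. -/
theorem sandwiched_neon_tube_count (m : ℕ) (s : Fin m → Bool)
    (hT : ∃ i : Fin m, s i = true)
    (h00 : ∀ (i : ℕ) (h1 : i < m) (h2 : i + 1 < m),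
      ¬(s ⟨i, h1⟩ = false ∧ s ⟨i + 1, h2⟩ = false))
    (h010 : ∀ (i : ℕ) (h1 : i < m) (h2 : i + 1 < m) (h3 : i + 2 < m),
      ¬(s ⟨i, h1⟩ = false ∧ s ⟨i + 1, h2⟩ = true ∧ s ⟨i + 2, h3⟩ = false))
    (a b : ℕ)
    (ha : a = (Finset.univ.filter fun i : Fin m => s i = true).card)
    (hb : b = (Finset.univ.filter fun i : Fin m => s i = false).card) :
    b ≤ (a + 2) / 2 ∧ m = a + b ∧ m ≤ 2 * a := by
  obtain ⟨i₀, hi₀⟩ := hT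
  have ha_pos : 0 < a := ha ▸ card_pos.2 ⟨i₀, by simpa using hi₀⟩
  have hab : a + b = m := by
    simpa [ha, hb, Bool.not_eq_true] using
      card_filter_add_card_filter_not (s := (univ : Finset (Fin m))) (fun i => s i = true)
  have hb_sparse : b ≤ (m + 2) / 3 := by
    rw [hb, ← card_map Fin.valEmbedding]
    refine card_le_of_forall_add_le three_pos (by simp) ?_
    simp only [mem_map, mem_filter, mem_univ, true_and, Fin.valEmbedding_apply]
    rintro _ ⟨i, hi, rfl⟩ _ ⟨j, hj, rfl⟩ hij
    exact add_three_le_of_eq_false h00 h010 hi hj hij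
  omega
end

section
/- Let L be a finite lattice such that the set of join-irreducible elements of L is contained in the union C ∪ U of two chains C and U of L. Then every element of L is either the bottom element, or a join-irreducible element, or the join of two join-irreducible elements (one from C and one from U). In particular, |L| ≤ 1 + |C| + |U| + |C|·|U|. -/
lemma chain_finset_sup'_mem {L : Type*} [Lattice L] (t : Finset L)
    (ht : IsChain (· ≤ ·) (↑t : Set L)) (h : t.Nonempty) :
    t.sup' h id ∈ t := by
  classical
  apply Finset.sup'_mem (↑t : Set L)
  · intro x hx y hy
    rcases ht.total hx hy with hxy | hyx
    · simpa [sup_eq_right.2 hxy] using hy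
    · simpa [sup_eq_left.2 hyx] using hx
  · exact fun i hi => hi

/-- If the join-irreducible elements of a finite lattice lie in the union of two
chains `C` and `U`, then every element is the bottom, join-irreducible, or a join
of a join-irreducible from `C` with one from `U`; hence `|L| ≤ 1 + |C| + |U| + |C||U|`. -/
theorem slim_element_decomposition {L : Type*} [Lattice L] [Fintype L] [OrderBot L]
    (C U : Finset L)
    (hC : IsChain (· ≤ ·) (↑C : Set L)) (hU : IsChain (· ≤ ·) (↑U : Set L))
    (hJ : {a : L | SupIrred a} ⊆ ↑C ∪ ↑U) :
    (∀ x : L, x = ⊥ ∨ SupIrred x ∨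
      ∃ c ∈ C, ∃ u ∈ U, SupIrred c ∧ SupIrred u ∧ x = c ⊔ u) ∧
    Fintype.card L ≤ 1 + C.card + U.card + C.card * U.card := by
  classical
  have main : ∀ x : L, x = ⊥ ∨ SupIrred x ∨
      ∃ c ∈ C, ∃ u ∈ U, SupIrred c ∧ SupIrred u ∧ x = c ⊔ u := by
    intro x
    obtain ⟨s, hsup, hirr⟩ := exists_supIrred_decomposition x
    set s1 := s ∩ C with hs1
    set s2 := s ∩ U with hs2
    have hsub : s ⊆ s1 ∪ s2 := by
      intro b hb
      rcases hJ (hirr hb) with hbC | hbU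
      · exact Finset.mem_union_left _ (Finset.mem_inter.2 ⟨hb, hbC⟩)
      · exact Finset.mem_union_right _ (Finset.mem_inter.2 ⟨hb, hbU⟩)
    have hseq : s = s1 ∪ s2 := by
      apply Finset.Subset.antisymm hsub
      exact Finset.union_subset (Finset.inter_subset_left) (Finset.inter_subset_left)
    have hx : x = s1.sup id ⊔ s2.sup id := by
      rw [← hsup, hseq, Finset.sup_union]
    have hc1 : IsChain (· ≤ ·) (↑s1 : Set L) := hC.mono (by simp [hs1])
    have hc2 : IsChain (· ≤ ·) (↑s2 : Set L) := hU.mono (by simp [hs2])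
    rcases Finset.eq_empty_or_nonempty s1 with h1 | h1 <;>
      rcases Finset.eq_empty_or_nonempty s2 with h2 | h2
    · left; simp [hx, h1, h2]
    · right; left
      have : x = s2.sup' h2 id := by
        rw [hx, h1]; rw [Finset.sup'_eq_sup]; simp
      rw [this]
      exact hirr (hseq ▸ Finset.mem_union_right _ (chain_finset_sup'_mem s2 hc2 h2))
    · right; left
      have : x = s1.sup' h1 id := by
        rw [hx, h2]; rw [Finset.sup'_eq_sup]; simp
      rw [this]
      exact hirr (hseq ▸ Finset.mem_union_left _ (chain_finset_sup'_mem s1 hc1 h1))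
    · right; right
      refine ⟨s1.sup' h1 id, ?_, s2.sup' h2 id, ?_, ?_, ?_, ?_⟩
      · exact Finset.inter_subset_right (chain_finset_sup'_mem s1 hc1 h1)
      · exact Finset.inter_subset_right (chain_finset_sup'_mem s2 hc2 h2)
      · exact hirr (hseq ▸ Finset.mem_union_left _ (chain_finset_sup'_mem s1 hc1 h1))
      · exact hirr (hseq ▸ Finset.mem_union_right _ (chain_finset_sup'_mem s2 hc2 h2))
      · rw [hx, Finset.sup'_eq_sup, Finset.sup'_eq_sup]
  refine ⟨main, ?_⟩
  have hcover : (Finset.univ : Finset L) ⊆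
      insert ⊥ (C ∪ U ∪ Finset.image₂ (· ⊔ ·) C U) := by
    intro x _
    rcases main x with rfl | hx | ⟨c, hc, u, hu, _, _, rfl⟩
    · exact Finset.mem_insert_self _ _
    · rcases hJ hx with h | h
      · exact Finset.mem_insert_of_mem (Finset.mem_union_left _ (Finset.mem_union_left _ h))
      · exact Finset.mem_insert_of_mem (Finset.mem_union_left _ (Finset.mem_union_right _ h))
    · exact Finset.mem_insert_of_mem (Finset.mem_union_right _
        (Finset.mem_image₂_of_mem hc hu))
  calc Fintype.card L = (Finset.univ : Finset L).card := rfl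
    _ ≤ (insert ⊥ (C ∪ U ∪ Finset.image₂ (· ⊔ ·) C U)).card := Finset.card_le_card hcover
    _ ≤ 1 + (C ∪ U ∪ Finset.image₂ (· ⊔ ·) C U).card := by
        rw [add_comm]; exact Finset.card_insert_le _ _
    _ ≤ 1 + (C.card + U.card + C.card * U.card) := by
        gcongr
        calc (C ∪ U ∪ Finset.image₂ (· ⊔ ·) C U).card
            ≤ (C ∪ U).card + (Finset.image₂ (· ⊔ ·) C U).card := Finset.card_union_le _ _
          _ ≤ (C.card + U.card) + C.card * U.card := by
              gcongr
              · exact Finset.card_union_le _ _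
              · exact Finset.card_image₂_le _ _ _
    _ = 1 + C.card + U.card + C.card * U.card := by ring
end

section
/- Let L be a finite semimodular lattice and let C be a maximal chain of L. Then every join-irreducible congruence of L equals con(a, b) for some covering pair a ≺ b with a, b ∈ C. Consequently, the number of join-irreducible congruences of L is at most the length of L. -/
/-- A lattice congruence: an equivalence relation compatible with `⊔` and `⊓`. -/
def IsLatCon {L : Type*} [Lattice L] (r : L → L → Prop) : Prop :=
  Equivalence r ∧
    (∀ a b c d : L, r a b → r c d → r (a ⊔ c) (b ⊔ d)) ∧
    (∀ a b c d : L, r a b → r c d → r (a ⊓ c) (b ⊓ d))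

/-- The congruences of a lattice, ordered by inclusion. -/
def LatCon (L : Type*) [Lattice L] := {r : L → L → Prop // IsLatCon r}

instance {L : Type*} [Lattice L] : PartialOrder (LatCon L) :=
  Subtype.partialOrder _

/-!
Semimodularity makes every prime interval `p ⋖ q` perspective, through `[p ⊔ a, q ⊔ a]`, to a
prime interval `a ⋖ b` of the maximal chain `C`, where `b` is the least element of `C` with
`q ≤ p ⊔ b`; perspective intervals are collapsed by the same congruences. A join-irreducible
congruence `θ` with lower cover `θ₀` collapses some prime interval that `θ₀` does not, and every
congruence collapsing that interval lies above `θ`. Hence `θ = con(a, b)` for a prime interval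
`a ⋖ b` of `C`, and `θ ↦ a` is an injection into `C` minus its top.
-/

section Order

variable {α : Type*} [PartialOrder α]

theorem le_of_lt_of_forall_covBy_eq [IsStronglyCoatomic α] {a t t₀ : α}
    (huniq : ∀ y, y ⋖ t → y = t₀) (hat : a < t) : a ≤ t₀ := by
  obtain ⟨g, hag, hgt⟩ := exists_le_covBy_of_lt hat
  exact huniq g hgt ▸ hag

theorem exists_covBy_of_split [Finite α] {R : α → α → Prop}
    (hsplit : ∀ ⦃u z v⦄, u < z → z < v → R u v → R u z ∨ R z v) {u v : α} (huv : u < v)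
    (h : R u v) : ∃ p q, p ⋖ q ∧ R p q := by
  induction hn : (Set.Icc u v).ncard using Nat.strong_induction_on generalizing u v with
  | _ n ih =>
    by_cases hcov : u ⋖ v
    · exact ⟨u, v, hcov, h⟩
    obtain ⟨z, huz, hzv⟩ := (not_covBy_iff huv).mp hcov
    rcases hsplit huz hzv h with hl | hr
    · exact ih _ (hn ▸ Set.ncard_lt_ncard (Set.Icc_ssubset_Icc_right huv.le le_rfl hzv)) huz hl rfl
    · exact ih _ (hn ▸ Set.ncard_lt_ncard (Set.Icc_ssubset_Icc_left huv.le huz le_rfl)) hzv hr rfl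

theorem IsChain.le_of_maximal {C S : Set α} (hC : IsChain (· ≤ ·) C) (hSC : S ⊆ C) {x c : α}
    (hx : Maximal (· ∈ S) x) (hc : c ∈ S) : c ≤ x :=
  (hC.total (hSC hc) (hSC hx.1)).elim id (hx.2 hc)

theorem IsChain.le_of_minimal {C S : Set α} (hC : IsChain (· ≤ ·) C) (hSC : S ⊆ C) {x c : α}
    (hx : Minimal (· ∈ S) x) (hc : c ∈ S) : x ≤ c :=
  (hC.total (hSC hx.1) (hSC hc)).elim id (hx.2 hc)

theorem IsChain.eq_of_covBy_of_covBy {C : Set α} (hC : IsChain (· ≤ ·) C) {a b b' : α}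
    (hb : b ∈ C) (hb' : b' ∈ C) (h : a ⋖ b) (h' : a ⋖ b') : b = b' := by
  rcases hC.total hb hb' with hle | hle
  · exact (h'.eq_or_eq h.le hle).resolve_left h.lt.ne'
  · exact ((h.eq_or_eq h'.le hle).resolve_left h'.lt.ne').symm

theorem IsMaxChain.exists_covBy_of_upward_closed {C : Set α} (hC : IsMaxChain (· ≤ ·) C)
    (hfin : C.Finite) {P : α → Prop} (hP : ∀ ⦃x y⦄, x ≤ y → P x → P y) {c₀ c₁ : α}
    (hc₀ : c₀ ∈ C) (hPc₀ : ¬P c₀) (hc₁ : c₁ ∈ C) (hPc₁ : P c₁) :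
    ∃ a ∈ C, ∃ b ∈ C, a ⋖ b ∧ ¬P a ∧ P b := by
  obtain ⟨b, hb⟩ := (hfin.sep P).exists_minimal ⟨c₁, hc₁, hPc₁⟩
  have hbelow : ∀ c ∈ C, c < b ∨ b ≤ c := fun c hc =>
    (hC.1.total hc hb.1.1).elim (fun h => h.lt_or_eq.imp_right ge_of_eq) Or.inr
  have hc₀b : c₀ < b := (hbelow c₀ hc₀).resolve_right fun h => hPc₀ (hP h hb.1.2)
  obtain ⟨a, ha⟩ := (hfin.sep (· < b)).exists_maximal ⟨c₀, hc₀, hc₀b⟩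
  have hle_a : ∀ c ∈ C, c < b → c ≤ a := fun c hc hcb =>
    hC.1.le_of_maximal (Set.sep_subset C _) ha ⟨hc, hcb⟩
  have hPa : ¬P a := fun hPa =>
    ha.1.2.not_ge (hC.1.le_of_minimal (Set.sep_subset C _) hb ⟨ha.1.1, hPa⟩)
  refine ⟨a, ha.1.1, b, hb.1.1, ⟨ha.1.2, fun z haz hzb => ?_⟩, hPa, hb.1.2⟩
  -- every element of `C` is `≤ a` or `≥ b`, so `z` is comparable with all of `C`
  have hzC : z ∈ C := by
    refine hC.2 (hC.1.insert fun c hc _ => ?_) (Set.subset_insert z C) ▸ Set.mem_insert z C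
    rcases hbelow c hc with hcb | hbc
    · exact Or.inr ((hle_a c hc hcb).trans haz.le)
    · exact Or.inl (hzb.le.trans hbc)
  exact haz.not_ge (hle_a z hzC hzb)

end Order

theorem Finset.card_filter_exists_lt_le {α : Type*} [PartialOrder α] [DecidableLT α]
    (C : Finset α) :
    (C.filter fun a => ∃ b ∈ C, a < b).card ≤ C.card - 1 := by
  classical
  rcases C.eq_empty_or_nonempty with rfl | hne
  · simp
  obtain ⟨m, hm⟩ := C.exists_maximal hne
  rw [← Finset.card_erase_of_mem hm.1]
  refine Finset.card_le_card fun a ha => ?_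
  obtain ⟨haC, b, hbC, hab⟩ := Finset.mem_filter.mp ha
  exact Finset.mem_erase.mpr ⟨fun ham => (ham ▸ hab).not_ge (hm.2 hbC (ham ▸ hab).le), haC⟩

namespace LatCon

variable {L : Type*} [Lattice L]

instance [Finite L] : Finite (LatCon L) := by
  unfold LatCon; infer_instance

def inf (φ ψ : LatCon L) : LatCon L :=
  ⟨fun x y => φ.1 x y ∧ ψ.1 x y,
    ⟨fun x => ⟨φ.2.1.refl x, ψ.2.1.refl x⟩, fun h => ⟨φ.2.1.symm h.1, ψ.2.1.symm h.2⟩,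
      fun h h' => ⟨φ.2.1.trans h.1 h'.1, ψ.2.1.trans h.2 h'.2⟩⟩,
    fun a b c d h h' => ⟨φ.2.2.1 a b c d h.1 h'.1, ψ.2.2.1 a b c d h.2 h'.2⟩,
    fun a b c d h h' => ⟨φ.2.2.2 a b c d h.1 h'.1, ψ.2.2.2 a b c d h.2 h'.2⟩⟩

variable (φ : LatCon L) {x y z : L}

theorem sup_right (h : φ.1 x y) (z : L) : φ.1 (x ⊔ z) (y ⊔ z) :=
  φ.2.2.1 x y z z h (φ.2.1.refl z)

theorem inf_right (h : φ.1 x y) (z : L) : φ.1 (x ⊓ z) (y ⊓ z) :=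
  φ.2.2.2 x y z z h (φ.2.1.refl z)

theorem rel_and_rel_of_le_of_le (h : φ.1 x y) (hxz : x ≤ z) (hzy : z ≤ y) :
    φ.1 x z ∧ φ.1 z y := by
  constructor
  · simpa only [inf_eq_left.mpr hxz, inf_eq_right.mpr hzy] using φ.inf_right h z
  · simpa only [sup_eq_right.mpr hxz, sup_eq_left.mpr hzy] using φ.sup_right h z

theorem rel_inf_sup_iff : φ.1 (x ⊓ y) (x ⊔ y) ↔ φ.1 x y := by
  constructor
  · intro h
    have hx : φ.1 x (x ⊔ y) := by simpa using φ.sup_right h x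
    have hy : φ.1 y (x ⊔ y) := by simpa using φ.sup_right h y
    exact φ.2.1.trans hx (φ.2.1.symm hy)
  · intro h
    have hinf : φ.1 (x ⊓ y) y := by simpa using φ.inf_right h y
    have hsup : φ.1 (x ⊔ y) y := by simpa using φ.sup_right h y
    exact φ.2.1.trans hinf (φ.2.1.symm hsup)

theorem rel_iff_of_inf_eq_of_sup_eq {d e : L} (hinf : y ⊓ d = x) (hsup : y ⊔ d = e) :
    φ.1 x y ↔ φ.1 d e := by
  constructor
  · intro h
    have hxd : x ⊔ d = d := sup_eq_right.mpr (hinf ▸ inf_le_right)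
    simpa only [hxd, hsup] using φ.sup_right h d
  · intro h
    have hye : y ≤ e := hsup ▸ le_sup_left
    simpa only [inf_comm d y, hinf, inf_eq_right.mpr hye] using φ.inf_right h y

theorem rel_iff_of_covBy_of_le_sup [IsUpperModularLattice L] {p q a b : L} (hpq : p ⋖ q)
    (hab : a ⋖ b) (hqa : ¬q ≤ p ⊔ a) (hqb : q ≤ p ⊔ b) : φ.1 p q ↔ φ.1 a b := by
  set d := p ⊔ a
  have hqd : q ⊓ d = p :=
    (hpq.eq_or_eq (le_inf hpq.le le_sup_left) inf_le_left).resolve_right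
      fun h => hqa (inf_eq_left.mp h)
  have hbd : b ⊓ d = a :=
    (hab.eq_or_eq (le_inf hab.le le_sup_right) inf_le_left).resolve_right
      fun h => hqa (hqb.trans (sup_le le_sup_left (inf_eq_left.mp h)))
  have hcov : d ⋖ b ⊔ d := covBy_sup_of_inf_covBy_left (hbd.symm ▸ hab)
  have hsup : q ⊔ d = b ⊔ d :=
    (hcov.eq_or_eq le_sup_right
        (sup_le (hqb.trans (sup_le (le_sup_left.trans le_sup_right) le_sup_left)) le_sup_right)
      ).resolve_left fun h => hqa (sup_eq_right.mp h)
  exact (φ.rel_iff_of_inf_eq_of_sup_eq hqd hsup).trans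
    (φ.rel_iff_of_inf_eq_of_sup_eq hbd rfl).symm

theorem exists_covBy_rel_not_rel [Finite L] {θ θ₀ : LatCon L} (h : ¬θ ≤ θ₀) :
    ∃ p q, p ⋖ q ∧ θ.1 p q ∧ ¬θ₀.1 p q := by
  obtain ⟨x, y, hθ, hθ₀⟩ : ∃ x y, θ.1 x y ∧ ¬θ₀.1 x y := by
    by_contra! h'
    exact h fun x y => h' x y
  rw [← rel_inf_sup_iff] at hθ hθ₀
  refine exists_covBy_of_split (R := fun p q => θ.1 p q ∧ ¬θ₀.1 p q) ?_
    (inf_le_sup.lt_of_ne fun he => hθ₀ (he ▸ θ₀.2.1.refl _)) ⟨hθ, hθ₀⟩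
  intro u z v huz hzv ⟨hθuv, hθ₀uv⟩
  obtain ⟨hθuz, hθzv⟩ := θ.rel_and_rel_of_le_of_le hθuv huz.le hzv.le
  by_cases hθ₀uz : θ₀.1 u z
  · exact Or.inr ⟨hθzv, fun hθ₀zv => hθ₀uv (θ₀.2.1.trans hθ₀uz hθ₀zv)⟩
  · exact Or.inl ⟨hθuz, hθ₀uz⟩

theorem le_of_rel_of_not_rel_of_forall_covBy_eq [Finite L] {θ θ₀ ψ : LatCon L} {p q : L}
    (huniq : ∀ φ, φ ⋖ θ → φ = θ₀) (hθ : θ.1 p q) (hθ₀ : ¬θ₀.1 p q) (hψ : ψ.1 p q) : θ ≤ ψ := by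
  have hle : ψ.inf θ ≤ θ := fun _ _ h => h.2
  rcases hle.eq_or_lt with heq | hlt
  · exact heq ▸ fun _ _ h => h.1
  · exact absurd (le_of_lt_of_forall_covBy_eq huniq hlt p q ⟨hψ, hθ⟩) hθ₀

end LatCon

theorem IsMaxChain.exists_covBy_forall_rel_iff {L : Type*} [Lattice L] [Finite L]
    [IsUpperModularLattice L] {C : Set L} (hC : IsMaxChain (· ≤ ·) C) {p q : L} (hpq : p ⋖ q) :
    ∃ a ∈ C, ∃ b ∈ C, a ⋖ b ∧ ∀ φ : LatCon L, φ.1 p q ↔ φ.1 a b := by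
  have : Fintype L := Fintype.ofFinite L
  have : Nonempty L := ⟨p⟩
  let _ := Fintype.toBoundedOrder L
  obtain ⟨a, ha, b, hb, hab, hqa, hqb⟩ :=
    hC.exists_covBy_of_upward_closed (Set.toFinite C) (P := fun c => q ≤ p ⊔ c)
      (fun _ _ hxy h => h.trans (sup_le_sup_left hxy p)) hC.bot_mem
      (by simpa using hpq.lt.not_ge) hC.top_mem (le_top.trans le_sup_right)
  exact ⟨a, ha, b, hb, hab, fun φ => φ.rel_iff_of_covBy_of_le_sup hpq hab hqa hqb⟩

theorem IsMaxChain.exists_covBy_generating {L : Type*} [Lattice L] [Finite L]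
    [IsUpperModularLattice L] {C : Set L} (hC : IsMaxChain (· ≤ ·) C) {θ : LatCon L}
    (hθ : ∃! ψ : LatCon L, ψ ⋖ θ) :
    ∃ a ∈ C, ∃ b ∈ C, a ⋖ b ∧ θ.1 a b ∧ ∀ ψ : LatCon L, ψ.1 a b → θ ≤ ψ := by
  obtain ⟨θ₀, hθ₀, huniq⟩ := hθ
  obtain ⟨p, q, hpq, hθpq, hθ₀pq⟩ := LatCon.exists_covBy_rel_not_rel hθ₀.lt.not_ge
  obtain ⟨a, ha, b, hb, hab, hiff⟩ := hC.exists_covBy_forall_rel_iff hpq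
  exact ⟨a, ha, b, hb, hab, (hiff θ).mp hθpq, fun ψ hψ =>
    LatCon.le_of_rel_of_not_rel_of_forall_covBy_eq huniq hθpq hθ₀pq ((hiff ψ).mpr hψ)⟩

theorem IsMaxChain.card_existsUnique_covBy_le {L : Type*} [Lattice L] [Fintype L]
    [IsUpperModularLattice L] {C : Finset L} (hC : IsMaxChain (· ≤ ·) (↑C : Set L)) :
    Nat.card {θ : LatCon L // ∃! ψ : LatCon L, ψ ⋖ θ} ≤ C.card - 1 := by
  classical
  choose lo hlo hi hhi hcov hrel hmin using
    fun θ : {θ : LatCon L // ∃! ψ : LatCon L, ψ ⋖ θ} => hC.exists_covBy_generating θ.2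
  let f (θ : {θ : LatCon L // ∃! ψ : LatCon L, ψ ⋖ θ}) :
      C.filter fun a => ∃ b ∈ C, a < b :=
    ⟨lo θ, Finset.mem_filter.mpr ⟨hlo θ, hi θ, hhi θ, (hcov θ).lt⟩⟩
  have hf : Function.Injective f := by
    intro θ₁ θ₂ hf₁₂
    have hlo₁₂ : lo θ₁ = lo θ₂ := congrArg Subtype.val hf₁₂
    have hhi₁₂ : hi θ₁ = hi θ₂ :=
      hC.1.eq_of_covBy_of_covBy (hhi θ₁) (hhi θ₂) (hcov θ₁) (hlo₁₂ ▸ hcov θ₂)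
    refine Subtype.ext (le_antisymm (hmin θ₁ θ₂.1 ?_) (hmin θ₂ θ₁.1 ?_))
    · exact hlo₁₂ ▸ hhi₁₂ ▸ hrel θ₂
    · exact hlo₁₂ ▸ hhi₁₂ ▸ hrel θ₁
  calc Nat.card {θ : LatCon L // ∃! ψ : LatCon L, ψ ⋖ θ}
      ≤ (C.filter fun a => ∃ b ∈ C, a < b).card :=
        (Nat.card_le_card_of_injective f hf).trans_eq (Nat.card_eq_finsetCard _)
    _ ≤ C.card - 1 := C.card_filter_exists_lt_le

theorem joinIrreducible_congruences_on_maximal_chain_general {L : Type*} [Lattice L] [Fintype L]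
    (hsm : ∀ x y : L, x ⊓ y ⋖ x → y ⋖ x ⊔ y)
    (C : Finset L) (hC : IsMaxChain (· ≤ ·) (↑C : Set L)) (k : ℕ)
    (hlen : ∀ D : Finset L, IsChain (· ≤ ·) (↑D : Set L) → D.card ≤ k + 1) :
    (∀ θ : LatCon L, (∃! ψ : LatCon L, ψ ⋖ θ) →
      ∃ a ∈ C, ∃ b ∈ C, a ⋖ b ∧ θ.1 a b ∧ ∀ ψ : LatCon L, ψ.1 a b → θ ≤ ψ) ∧
    Nat.card {θ : LatCon L // ∃! ψ : LatCon L, ψ ⋖ θ} ≤ k := by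
  have : IsUpperModularLattice L := ⟨fun h => hsm _ _ h⟩
  have hcard := hC.card_existsUnique_covBy_le
  have hC_len := hlen C hC.1
  exact ⟨fun θ hθ => hC.exists_covBy_generating hθ, by omega⟩

/-- In a finite semimodular lattice of length `k`, every join-irreducible congruence
is generated by a covering pair lying on any fixed maximal chain `C`; consequently
there are at most `k` join-irreducible congruences. -/
theorem joinIrreducible_congruences_on_maximal_chain {L : Type*} [Lattice L] [Fintype L]
    (hsm : ∀ x y : L, x ⊓ y ⋖ x → y ⋖ x ⊔ y)
    (C : Finset L) (hC : IsMaxChain (· ≤ ·) (↑C : Set L)) (k : ℕ)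
    (hlen : ∀ D : Finset L, IsChain (· ≤ ·) (↑D : Set L) → D.card ≤ k + 1)
    (hlen' : ∃ D : Finset L, IsChain (· ≤ ·) (↑D : Set L) ∧ D.card = k + 1) :
    (∀ θ : LatCon L, (∃! ψ : LatCon L, ψ ⋖ θ) →
      ∃ a ∈ C, ∃ b ∈ C, a ⋖ b ∧ θ.1 a b ∧ ∀ ψ : LatCon L, ψ.1 a b → θ ≤ ψ) ∧
    Nat.card {θ : LatCon L // ∃! ψ : LatCon L, ψ ⋖ θ} ≤ k :=
  joinIrreducible_congruences_on_maximal_chain_general hsm C hC k hlen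
end

section
/- Let L be a finite lattice and let c, d ∈ L be elements such that x = (x ∧ c) ∨ (x ∧ d) holds for every x ∈ L, and such that both sets {x ∧ c : x ∈ L} and {x ∧ d : x ∈ L} are chains in L. Let w ∈ L be meet-irreducible with unique upper cover w⁺, and assume w⁺ ∧ c > w ∧ c. Then {x ∈ L : x ∧ c = w ∧ c} is exactly the interval [w ∧ c, w]. -/
/-- Abstract form of equation (17) of the paper: if every `x` decomposes as
`(x ⊓ c) ⊔ (x ⊓ d)`, both projections have chains as images, and `w` is
meet-irreducible with unique cover `wp` satisfying `w ⊓ c < wp ⊓ c`, then the set of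
elements projecting to `w ⊓ c` is exactly the interval `[w ⊓ c, w]`. -/
theorem fiber_is_interval {L : Type*} [Lattice L] [Fintype L] (c d w wp : L)
    (hdecomp : ∀ x : L, x = (x ⊓ c) ⊔ (x ⊓ d))
    (hCc : IsChain (· ≤ ·) {y : L | ∃ x : L, y = x ⊓ c})
    (hCd : IsChain (· ≤ ·) {y : L | ∃ x : L, y = x ⊓ d})
    (hcov : w ⋖ wp) (huniq : ∀ z : L, w ⋖ z → z = wp)
    (hgt : w ⊓ c < wp ⊓ c) :
    {x : L | x ⊓ c = w ⊓ c} = Set.Icc (w ⊓ c) w := by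
  ext x
  simp only [Set.mem_setOf_eq, Set.mem_Icc]
  constructor
  · intro hx
    have hcomp : x ⊓ d ≤ w ⊓ d ∨ w ⊓ d ≤ x ⊓ d := by
      rcases eq_or_ne (x ⊓ d) (w ⊓ d) with h | h
      · exact Or.inl h.le
      · rcases hCd ⟨x, rfl⟩ ⟨w, rfl⟩ h with h' | h'
        · exact Or.inl h'
        · exact Or.inr h'
    have hle : x ≤ w := by
      rcases hcomp with h | h
      · calc x = (x ⊓ c) ⊔ (x ⊓ d) := hdecomp x
          _ ≤ (w ⊓ c) ⊔ (w ⊓ d) := sup_le_sup hx.le h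
          _ = w := (hdecomp w).symm
      · have hwx : w ≤ x := by
          calc w = (w ⊓ c) ⊔ (w ⊓ d) := hdecomp w
            _ ≤ (x ⊓ c) ⊔ (x ⊓ d) := sup_le_sup hx.ge h
            _ = x := (hdecomp x).symm
        rcases eq_or_lt_of_le hwx with h' | h'
        · exact h'.ge
        · obtain ⟨u, hu, hux⟩ := h'.exists_covby_le
          have : wp ≤ x := (huniq u hu) ▸ hux
          have : wp ⊓ c ≤ w ⊓ c := hx ▸ inf_le_inf_right c this
          exact absurd this (not_le_of_gt hgt)
    exact ⟨hx ▸ inf_le_left, hle⟩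
  · rintro ⟨h1, h2⟩
    exact le_antisymm (inf_le_inf_right c h2) (le_inf h1 inf_le_right)
end

section
/- Let L be a finite lattice and c, d ∈ L with x = (x ∧ c) ∨ (x ∧ d) for all x ∈ L, such that {x ∧ c : x ∈ L} and {x ∧ d : x ∈ L} are chains. Let w be a meet-irreducible element with unique cover w⁺ satisfying w⁺ ∧ c > w ∧ c and w⁺ ∧ d > w ∧ d. Define F := [w ∧ c, w] ∪ [w ∧ d, w]. Then L \ F is closed under binary meets, i.e., it is a meet-subsemilattice of L. -/
private lemma aux_le {L : Type*} [Lattice L] [Fintype L] (c d w wp x : L)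
    (hdecomp : ∀ x : L, x = (x ⊓ c) ⊔ (x ⊓ d))
    (hCd : IsChain (· ≤ ·) {y : L | ∃ x : L, y = x ⊓ d})
    (huniq : ∀ z : L, w ⋖ z → z = wp)
    (hgtc : w ⊓ c < wp ⊓ c)
    (hx : x ⊓ c = w ⊓ c) : x ≤ w := by
  have hcomp : x ⊓ d ≤ w ⊓ d ∨ w ⊓ d ≤ x ⊓ d := by
    rcases eq_or_ne (x ⊓ d) (w ⊓ d) with h | h
    · exact Or.inl h.le
    · exact (hCd ⟨x, rfl⟩ ⟨w, rfl⟩ h).imp id id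
  rcases hcomp with h | h
  · calc x = (x ⊓ c) ⊔ (x ⊓ d) := hdecomp x
      _ ≤ (w ⊓ c) ⊔ (w ⊓ d) := sup_le_sup hx.le h
      _ = w := (hdecomp w).symm
  · -- w ≤ x
    have hwx : w ≤ x := by
      calc w = (w ⊓ c) ⊔ (w ⊓ d) := hdecomp w
        _ ≤ x := sup_le (hx ▸ inf_le_left) (le_trans h inf_le_left)
    rcases eq_or_lt_of_le hwx with heq | hlt
    · exact heq.ge
    · exfalso
      obtain ⟨z, hz, hzx⟩ := exists_covBy_le_of_lt hlt
      have hwpx : wp ≤ x := (huniq z hz) ▸ hzx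
      have : wp ⊓ c ≤ w ⊓ c := le_trans (inf_le_inf_right c hwpx) hx.le
      exact hgtc.not_ge this

/-- Abstract form of Lemma 4.4: removing the fork
`F = [w ⊓ c, w] ∪ [w ⊓ d, w]` determined by a meet-irreducible `w` leaves a
meet-subsemilattice. -/
theorem remove_fork_meet_closed {L : Type*} [Lattice L] [Fintype L] (c d w wp : L)
    (hdecomp : ∀ x : L, x = (x ⊓ c) ⊔ (x ⊓ d))
    (hCc : IsChain (· ≤ ·) {y : L | ∃ x : L, y = x ⊓ c})
    (hCd : IsChain (· ≤ ·) {y : L | ∃ x : L, y = x ⊓ d})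
    (hcov : w ⋖ wp) (huniq : ∀ z : L, w ⋖ z → z = wp)
    (hgtc : w ⊓ c < wp ⊓ c) (hgtd : w ⊓ d < wp ⊓ d) :
    ∀ x y : L, x ∉ Set.Icc (w ⊓ c) w ∪ Set.Icc (w ⊓ d) w →
      y ∉ Set.Icc (w ⊓ c) w ∪ Set.Icc (w ⊓ d) w →
      x ⊓ y ∉ Set.Icc (w ⊓ c) w ∪ Set.Icc (w ⊓ d) w := by
  have hdecomp' : ∀ x : L, x = (x ⊓ d) ⊔ (x ⊓ c) := fun x => (hdecomp x).trans (sup_comm _ _)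
  intro x y hx hy hm
  rcases hm with ⟨h1, h2⟩ | ⟨h1, h2⟩
  · -- x ⊓ y ∈ [w ⊓ c, w]
    have hmc : (x ⊓ y) ⊓ c = w ⊓ c :=
      le_antisymm (inf_le_inf_right c h2) (le_inf h1 inf_le_right)
    have hcomp : x ⊓ c ≤ y ⊓ c ∨ y ⊓ c ≤ x ⊓ c := by
      rcases eq_or_ne (x ⊓ c) (y ⊓ c) with h | h
      · exact Or.inl h.le
      · exact (hCc ⟨x, rfl⟩ ⟨y, rfl⟩ h).imp id id
    rcases hcomp with h | h
    · have hxc : x ⊓ c = w ⊓ c := by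
        refine le_antisymm ?_ (hmc ▸ inf_le_inf_right c inf_le_left)
        rw [← hmc]
        exact le_inf (le_inf inf_le_left (le_trans h inf_le_left)) inf_le_right
      have := aux_le c d w wp x hdecomp hCd huniq hgtc hxc
      exact hx (Or.inl ⟨hxc ▸ inf_le_left, this⟩)
    · have hyc : y ⊓ c = w ⊓ c := by
        refine le_antisymm ?_ (hmc ▸ inf_le_inf_right c inf_le_right)
        rw [← hmc]
        exact le_inf (le_inf (le_trans h inf_le_left) inf_le_left) inf_le_right
      have := aux_le c d w wp y hdecomp hCd huniq hgtc hyc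
      exact hy (Or.inl ⟨hyc ▸ inf_le_left, this⟩)
  · -- x ⊓ y ∈ [w ⊓ d, w]
    have hmd : (x ⊓ y) ⊓ d = w ⊓ d :=
      le_antisymm (inf_le_inf_right d h2) (le_inf h1 inf_le_right)
    have hcomp : x ⊓ d ≤ y ⊓ d ∨ y ⊓ d ≤ x ⊓ d := by
      rcases eq_or_ne (x ⊓ d) (y ⊓ d) with h | h
      · exact Or.inl h.le
      · exact (hCd ⟨x, rfl⟩ ⟨y, rfl⟩ h).imp id id
    rcases hcomp with h | h
    · have hxd : x ⊓ d = w ⊓ d := by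
        refine le_antisymm ?_ (hmd ▸ inf_le_inf_right d inf_le_left)
        rw [← hmd]
        exact le_inf (le_inf inf_le_left (le_trans h inf_le_left)) inf_le_right
      have := aux_le d c w wp x hdecomp' hCc huniq hgtd hxd
      exact hx (Or.inr ⟨hxd ▸ inf_le_left, this⟩)
    · have hyd : y ⊓ d = w ⊓ d := by
        refine le_antisymm ?_ (hmd ▸ inf_le_inf_right d inf_le_right)
        rw [← hmd]
        exact le_inf (le_inf (le_trans h inf_le_left) inf_le_left) inf_le_right
      have := aux_le d c w wp y hdecomp' hCc huniq hgtd hyd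
      exact hy (Or.inr ⟨hyd ▸ inf_le_left, this⟩)
end

section
/- Let K be a finite semimodular lattice whose set of join-irreducible elements is the union of two chains (i.e., K is slim). If K has exactly one join-irreducible congruence, then K is isomorphic to the two-element chain. -/
namespace SlimAux

variable {K : Type*} [Lattice K]

/-- The diagonal congruence. -/
def latEq : LatCon K :=
  ⟨Eq, eq_equivalence, fun a b c d h1 h2 => by rw [h1, h2],
    fun a b c d h1 h2 => by rw [h1, h2]⟩

/-- The full congruence. -/
def latTop : LatCon K :=
  ⟨fun _ _ => True, ⟨fun _ => trivial, fun _ => trivial, fun _ _ => trivial⟩,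
    fun _ _ _ _ _ _ => trivial, fun _ _ _ _ _ _ => trivial⟩

lemma latcon_le {r s : LatCon K} : r ≤ s ↔ ∀ x y, r.1 x y → s.1 x y := Iff.rfl

lemma latEq_le (r : LatCon K) : (latEq : LatCon K) ≤ r := by
  intro x y h
  exact h ▸ r.2.1.1 x

lemma le_latTop (r : LatCon K) : r ≤ (latTop : LatCon K) := by
  intro x y _
  trivial

/-- From the `∃!` hypothesis: every congruence is the diagonal or the full one,
and they are distinct. -/
lemma latcon_classify [Fintype K]
    (hji : ∃! θ : LatCon K, ∃! ψ : LatCon K, ψ ⋖ θ) :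
    (∃ x y : K, x ≠ y) ∧ ∀ r : LatCon K, r = (latEq : LatCon K) ∨ r = latTop := by
  haveI : Finite (LatCon K) := inferInstanceAs (Finite {r : K → K → Prop // IsLatCon r})
  obtain ⟨θ, ⟨ψ0, hψ0, _⟩, hθuniq⟩ := hji
  have hΔθ : (latEq : LatCon K) < θ := lt_of_le_of_lt (latEq_le ψ0) hψ0.lt
  have classify : ∀ r : LatCon K, r = (latEq : LatCon K) ∨ r = θ := by
    by_contra hcon
    push_neg at hcon
    obtain ⟨r1, hr1Δ, hr1θ⟩ := hcon
    obtain ⟨r0, hr0, hmin⟩ := (wellFounded_lt (α := LatCon K)).has_min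
      {r : LatCon K | r ≠ (latEq : LatCon K) ∧ r ≠ θ} ⟨r1, hr1Δ, hr1θ⟩
    have hsmall : ∀ s : LatCon K, s < r0 → s = (latEq : LatCon K) ∨ s = θ := by
      intro s hs
      by_contra hcs
      push_neg at hcs
      exact hmin s ⟨hcs.1, hcs.2⟩ hs
    have hΔr0 : (latEq : LatCon K) < r0 := (latEq_le r0).lt_of_ne (Ne.symm hr0.1)
    by_cases hθr : θ < r0
    · have hcov : θ ⋖ r0 := by
        refine ⟨hθr, fun t h1 h2 => ?_⟩
        rcases hsmall t h2 with rfl | rfl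
        · exact absurd (hΔθ.trans h1) (lt_irrefl _)
        · exact lt_irrefl _ h1
      have huniq : ∀ ψ : LatCon K, ψ ⋖ r0 → ψ = θ := by
        intro ψ hψ
        rcases hsmall ψ hψ.lt with rfl | rfl
        · exact absurd hθr (hψ.2 hΔθ)
        · rfl
      exact hr0.2 (hθuniq r0 ⟨θ, hcov, huniq⟩)
    · have hall : ∀ s : LatCon K, s < r0 → s = (latEq : LatCon K) := by
        intro s hs
        rcases hsmall s hs with rfl | rfl
        · rfl
        · exact absurd hs hθr
      have hcov : (latEq : LatCon K) ⋖ r0 := by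
        refine ⟨hΔr0, fun t h1 h2 => ?_⟩
        rw [hall t h2] at h1
        exact lt_irrefl _ h1
      have huniq : ∀ ψ : LatCon K, ψ ⋖ r0 → ψ = (latEq : LatCon K) :=
        fun ψ hψ => hall ψ hψ.lt
      exact hr0.2 (hθuniq r0 ⟨(latEq : LatCon K), hcov, huniq⟩)
  have hθtop : θ = (latTop : LatCon K) := by
    rcases classify latTop with h | h
    · have h2 : θ ≤ (latEq : LatCon K) := by rw [← h]; exact le_latTop θ
      exact absurd h2 (not_le_of_gt hΔθ)
    · exact h.symm
  constructor
  · by_contra hxy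
    push_neg at hxy
    have : (latEq : LatCon K) = latTop := by
      apply Subtype.ext
      funext x y
      exact propext ⟨fun _ => trivial, fun _ => hxy x y⟩
    exact hΔθ.ne (this.trans hθtop.symm)
  · intro r
    rcases classify r with h | h
    · exact Or.inl h
    · exact Or.inr (h.trans hθtop)

end SlimAux

/-- A slim semimodular lattice with exactly one join-irreducible congruence is the
two-element chain. -/
theorem slim_semimodular_one_ji_congruence {K : Type*} [Lattice K] [Fintype K]
    (hsm : ∀ x y : K, x ⊓ y ⋖ x → y ⋖ x ⊔ y)
    (hslim : ∃ C U : Set K, IsChain (· ≤ ·) C ∧ IsChain (· ≤ ·) U ∧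
      {a : K | SupIrred a} = C ∪ U)
    (hji : ∃! θ : LatCon K, ∃! ψ : LatCon K, ψ ⋖ θ) :
    Nonempty (K ≃o Fin 2) := by
  classical
  obtain ⟨C, U, hC, hU, hCU⟩ := hslim
  obtain ⟨⟨x0, y0, hxy⟩, hcls⟩ := SlimAux.latcon_classify hji
  haveI : Nonempty K := ⟨x0⟩
  -- bottom and top
  set b : K := Finset.univ.inf' Finset.univ_nonempty id with hbdef
  set t : K := Finset.univ.sup' Finset.univ_nonempty id with htdef
  have hb : ∀ x : K, b ≤ x := fun x => Finset.inf'_le id (Finset.mem_univ x)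
  have ht : ∀ x : K, x ≤ t := fun x => Finset.le_sup' id (Finset.mem_univ x)
  have hbt : b ≠ t := by
    intro h
    apply hxy
    have h1 : x0 = b := le_antisymm (h ▸ ht x0) (hb x0)
    have h2 : y0 = b := le_antisymm (h ▸ ht y0) (hb y0)
    rw [h1, h2]
  -- key dichotomy
  have hall : ∀ z : K, z = b ∨ z = t := by
    by_contra hz
    push_neg at hz
    obtain ⟨z, hz1, hz2⟩ := hz
    -- get an atom-like element a
    obtain ⟨a, ha, hamin'⟩ := (wellFounded_lt (α := K)).has_min
      {x : K | x ≠ b} ⟨t, Ne.symm hbt⟩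
    have hamin : ∀ u : K, u < a → u = b := by
      intro u hu
      by_contra hub
      exact hamin' u hub hu
    have hba : b < a := (hb a).lt_of_ne (Ne.symm ha)
    have hnotminb : IsMin b := fun c _ => hb c
    have hsupIrr : SupIrred a := by
      constructor
      · intro h
        exact ha (le_antisymm (h (hb a)) (hb a))
      · intro p q hpq
        by_contra hcontra
        push_neg at hcontra
        have hp : p = b := hamin p (lt_of_le_of_ne (hpq ▸ le_sup_left) hcontra.1)
        have hq : q = b := hamin q (lt_of_le_of_ne (hpq ▸ le_sup_right) hcontra.2)
        rw [hp, hq, sup_idem] at hpq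
        exact ha hpq.symm
    have haCU : a ∈ C ∪ U := by
      have : a ∈ {x : K | SupIrred x} := hsupIrr
      rwa [hCU] at this
    -- every element of C ∪ U is SupIrred, so b is in neither chain
    have hCUirr : ∀ x : K, x ∈ C ∪ U → SupIrred x := by
      intro x hx
      have : x ∈ {y : K | SupIrred y} := by rw [hCU]; exact hx
      exact this
    have hbC : b ∉ C := fun h => (hCUirr b (Or.inl h)).1 hnotminb
    have hbU : b ∉ U := fun h => (hCUirr b (Or.inr h)).1 hnotminb
    -- combining within a chain
    have comb : ∀ (S : Set K), IsChain (· ≤ ·) S → ∀ w z : K,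
        (w = b ∨ w ∈ S) → (z = b ∨ z ∈ S) → (w ⊔ z = b ∨ w ⊔ z ∈ S) := by
      intro S hS w z hw hz
      rcases hw with rfl | hw
      · rcases hz with rfl | hz
        · left; exact sup_idem b
        · right; rwa [sup_eq_right.2 (hb z)]
      · rcases hz with rfl | hz
        · right; rwa [sup_eq_left.2 (hb w)]
        · rcases eq_or_ne w z with rfl | hne
          · right; rwa [sup_idem]
          · rcases hS hw hz hne with h | h
            · right; rwa [sup_eq_right.2 h]
            · right; rwa [sup_eq_left.2 h]
    -- decomposition of any element as c ⊔ u with c ∈ C ∪ {b}, u ∈ U ∪ {b}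
    have decomp : ∀ v : K, ∃ c u : K, (c = b ∨ c ∈ C) ∧ (u = b ∨ u ∈ U) ∧ c ⊔ u = v := by
      intro v
      refine (wellFounded_lt (α := K)).induction
        (C := fun v => ∃ c u : K, (c = b ∨ c ∈ C) ∧ (u = b ∨ u ∈ U) ∧ c ⊔ u = v) v ?_
      intro v IH
      by_cases hsi : SupIrred v
      · have hv : v ∈ C ∪ U := by
          have : v ∈ {x : K | SupIrred x} := hsi
          rwa [hCU] at this
        rcases hv with hv | hv
        · exact ⟨v, b, Or.inr hv, Or.inl rfl, sup_eq_left.2 (hb v)⟩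
        · exact ⟨b, v, Or.inl rfl, Or.inr hv, sup_eq_right.2 (hb v)⟩
      · by_cases hvb : v = b
        · exact ⟨b, b, Or.inl rfl, Or.inl rfl, by rw [hvb, sup_idem]⟩
        · have hminv : ¬ IsMin v := by
            intro h
            exact hvb (le_antisymm (h (hb v)) (hb v))
          have hex : ∃ p q : K, p ⊔ q = v ∧ p ≠ v ∧ q ≠ v := by
            by_contra hcon
            push_neg at hcon
            refine hsi ⟨hminv, fun p q hpq => ?_⟩
            by_contra hc
            push_neg at hc
            exact hc.2 (hcon p q hpq hc.1)
          obtain ⟨p, q, hpq, hp, hq⟩ := hex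
          have hplt : p < v := lt_of_le_of_ne (hpq ▸ le_sup_left) hp
          have hqlt : q < v := lt_of_le_of_ne (hpq ▸ le_sup_right) hq
          obtain ⟨cp, up, hcp, hup, hep⟩ := IH p hplt
          obtain ⟨cq, uq, hcq, huq, heq⟩ := IH q hqlt
          refine ⟨cp ⊔ cq, up ⊔ uq, comb C hC cp cq hcp hcq, comb U hU up uq hup huq, ?_⟩
          rw [sup_sup_sup_comm, hep, heq, hpq]
    -- a is join-prime
    have hprime : ∀ x y : K, a ≤ x ⊔ y → a ≤ x ∨ a ≤ y := by
      intro x y hle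
      obtain ⟨cx, ux, hcx, hux, hex⟩ := decomp x
      obtain ⟨cy, uy, hcy, huy, hey⟩ := decomp y
      have hxy' : x ⊔ y = (cx ⊔ cy) ⊔ (ux ⊔ uy) := by
        rw [sup_sup_sup_comm, hex, hey]
      have hcle : cx ⊔ cy ≤ x ∨ cx ⊔ cy ≤ y := by
        have hcxx : cx ≤ x := hex ▸ le_sup_left
        have hcyy : cy ≤ y := hey ▸ le_sup_left
        rcases hcx with rfl | hcx
        · right; rw [sup_eq_right.2 (hb cy)]; exact hcyy
        · rcases hcy with rfl | hcy
          · left; rw [sup_eq_left.2 (hb cx)]; exact hcxx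
          · rcases eq_or_ne cx cy with rfl | hne
            · left; rw [sup_idem]; exact hcxx
            · rcases hC hcx hcy hne with h | h
              · right; rw [sup_eq_right.2 h]; exact hcyy
              · left; rw [sup_eq_left.2 h]; exact hcxx
      have hule : ux ⊔ uy ≤ x ∨ ux ⊔ uy ≤ y := by
        have huxx : ux ≤ x := hex ▸ le_sup_right
        have huyy : uy ≤ y := hey ▸ le_sup_right
        rcases hux with rfl | hux
        · right; rw [sup_eq_right.2 (hb uy)]; exact huyy
        · rcases huy with rfl | huy
          · left; rw [sup_eq_left.2 (hb ux)]; exact huxx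
          · rcases eq_or_ne ux uy with rfl | hne
            · left; rw [sup_idem]; exact huxx
            · rcases hU hux huy hne with h | h
              · right; rw [sup_eq_right.2 h]; exact huyy
              · left; rw [sup_eq_left.2 h]; exact huxx
      have hcmem : cx ⊔ cy = b ∨ cx ⊔ cy ∈ C := comb C hC cx cy hcx hcy
      have humem : ux ⊔ uy = b ∨ ux ⊔ uy ∈ U := comb U hU ux uy hux huy
      -- helper: if a is below one chain part
      rcases haCU with haC | haU
      · -- a ∈ C : compare with cx ⊔ cy
        rcases hcmem with hcb | hcC
        · -- the C-part is b, so a ≤ ux ⊔ uy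
          have : a ≤ ux ⊔ uy := by
            rw [hxy', hcb, sup_eq_right.2 (hb _)] at hle
            exact hle
          rcases hule with h | h
          · exact Or.inl (this.trans h)
          · exact Or.inr (this.trans h)
        · rcases eq_or_ne a (cx ⊔ cy) with heq' | hne
          · rcases hcle with h | h
            · exact Or.inl (heq' ▸ h)
            · exact Or.inr (heq' ▸ h)
          · rcases hC haC hcC hne with h | h
            · rcases hcle with h' | h'
              · exact Or.inl (h.trans h')
              · exact Or.inr (h.trans h')
            · -- cx ⊔ cy < a, so cx ⊔ cy = b, contradiction with b ∉ C
              have : cx ⊔ cy = b := hamin _ (h.lt_of_ne (Ne.symm hne))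
              exact absurd (this ▸ hcC) hbC
      · -- a ∈ U : compare with ux ⊔ uy
        rcases humem with hub | huU
        · have : a ≤ cx ⊔ cy := by
            rw [hxy', hub, sup_eq_left.2 (hb _)] at hle
            exact hle
          rcases hcle with h | h
          · exact Or.inl (this.trans h)
          · exact Or.inr (this.trans h)
        · rcases eq_or_ne a (ux ⊔ uy) with heq' | hne
          · rcases hule with h | h
            · exact Or.inl (heq' ▸ h)
            · exact Or.inr (heq' ▸ h)
          · rcases hU haU huU hne with h | h
            · rcases hule with h' | h'
              · exact Or.inl (h.trans h')
              · exact Or.inr (h.trans h')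
            · have : ux ⊔ uy = b := hamin _ (h.lt_of_ne (Ne.symm hne))
              exact absurd (this ▸ huU) hbU
    -- the congruence determined by the prime filter at a
    have hrcon : IsLatCon (fun x y : K => (a ≤ x ↔ a ≤ y)) := by
      refine ⟨⟨fun _ => Iff.rfl, Iff.symm, Iff.trans⟩, ?_, ?_⟩
      · intro p q s u h1 h2
        constructor
        · intro h
          rcases hprime p s h with h' | h'
          · exact (h1.1 h').trans le_sup_left
          · exact (h2.1 h').trans le_sup_right
        · intro h
          rcases hprime q u h with h' | h'
          · exact (h1.2 h').trans le_sup_left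
          · exact (h2.2 h').trans le_sup_right
      · intro p q s u h1 h2
        simp only [le_inf_iff]
        exact ⟨fun h => ⟨h1.1 h.1, h2.1 h.2⟩, fun h => ⟨h1.2 h.1, h2.2 h.2⟩⟩
    rcases hcls ⟨fun x y : K => (a ≤ x ↔ a ≤ y), hrcon⟩ with hr | hr
    · -- diagonal: but a and t are related
      have hv : a = t := by
        have h : (a ≤ a ↔ a ≤ t) := iff_of_true le_rfl (ht a)
        have h' := congrArg Subtype.val hr
        exact Eq.mp (congrFun (congrFun h' a) t) h
      have hza : z < a := by
        rw [hv]
        exact (ht z).lt_of_ne hz2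
      exact hz1 (hamin z hza)
    · -- full: but b and a are not related
      have h : (a ≤ b ↔ a ≤ a) := by
        have h' := congrArg Subtype.val hr
        exact Eq.mpr (congrFun (congrFun h' b) a) trivial
      exact ha (le_antisymm (h.2 le_rfl) (hb a))
  -- build the order isomorphism
  refine ⟨⟨⟨fun x => if x = b then 0 else 1, fun i => if i = 0 then b else t, ?_, ?_⟩, ?_⟩⟩
  · intro x
    rcases hall x with rfl | rfl
    · show (if (if b = b then (0:Fin 2) else 1) = 0 then b else t) = b
      rw [if_pos rfl, if_pos rfl]
    · show (if (if t = b then (0:Fin 2) else 1) = 0 then b else t) = t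
      rw [if_neg (Ne.symm hbt), if_neg (by decide : ¬(1:Fin 2) = 0)]
  · intro i
    fin_cases i
    · show (if (if (0:Fin 2) = 0 then b else t) = b then (0:Fin 2) else 1) = 0
      rw [if_pos rfl, if_pos rfl]
    · show (if (if (1:Fin 2) = 0 then b else t) = b then (0:Fin 2) else 1) = 1
      rw [if_neg (by decide : ¬(1:Fin 2) = 0), if_neg (Ne.symm hbt)]
  · intro x y
    show (if x = b then (0:Fin 2) else 1) ≤ (if y = b then (0:Fin 2) else 1) ↔ x ≤ y
    rcases hall x with rfl | rfl <;> rcases hall y with rfl | rfl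
    · rw [if_pos rfl]
      exact iff_of_true (by decide) le_rfl
    · rw [if_pos rfl, if_neg (Ne.symm hbt)]
      exact iff_of_true (by decide) (hb t)
    · rw [if_neg (Ne.symm hbt), if_pos rfl]
      exact iff_of_false (by decide) (fun h => hbt (le_antisymm (hb t) h))
    · rw [if_neg (Ne.symm hbt)]
      exact iff_of_true (by decide) le_rfl
end

section
/- Let K be a finite semimodular lattice whose set of join-irreducible elements is the union of two chains, and suppose K has exactly two join-irreducible congruences. Then Con K is the four-element Boolean lattice, and K is isomorphic either to the three-element chain or to the four-element Boolean lattice. -/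
/-!
`Con K` is a finite lattice with exactly two sup-irreducibles `α, β`, so its elements are
`⊥, α, β, α ⊔ β`; any two incomparable congruences are then `α` and `β`, and both are atoms.

Slimness makes every atom `a` of `K` sup-prime, so `x ↦ (a ≤ x)` is a lattice homomorphism
to `Prop` whose kernel `χ a` has the two blocks `{x | a ≤ x}` and its complement.
* If `K` has two atoms `a, b`, then `χ a, χ b` are incomparable, hence distinct atoms of `Con K`,
  so `χ a ⊓ χ b = ⊥`: an element `x` is determined by `(a ≤ x, b ≤ x)` and `K = {⊥, a, b, a ⊔ b}`.
* If `a` is the only atom, it is comparable with every element, so collapsing `[⊥, a]` is a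
  congruence, incomparable with `χ a` unless `K` is the two-element chain (whose only
  congruences are `⊥` and `⊤`). The filter `[a, ⊤]` is again slim, so an atom `a₂` of it is
  sup-prime; `χ a ⊓ χ a₂ < χ a` forces `χ a ⊓ χ a₂ = ⊥`, and then `K = {⊥, a, a₂ = ⊤}`.
-/

section SupIrred

variable {L : Type*} [Lattice L]

theorem supIrred_iff_existsUnique_covBy [IsStronglyCoatomic L] {a : L} :
    SupIrred a ↔ ∃! b, b ⋖ a := by
  constructor
  · intro ha
    obtain ⟨b, hb⟩ := not_isMin_iff.1 ha.not_isMin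
    obtain ⟨c, -, hc⟩ := exists_le_covBy_of_lt hb
    refine ⟨c, hc, fun d hd => ?_⟩
    by_contra hne
    rcases ha.2 (hd.wcovBy.sup_eq hc.wcovBy hne) with h | h
    · exact hd.ne h
    · exact hc.ne h
  · rintro ⟨c, hc, huniq⟩
    have below_c : ∀ b, b < a → b ≤ c := fun b hb => by
      obtain ⟨d, hbd, hd⟩ := exists_le_covBy_of_lt hb
      exact huniq d hd ▸ hbd
    refine ⟨hc.lt.not_isMin, fun b d h => ?_⟩
    by_contra! hne
    have hb : b < a := lt_of_le_of_ne (h ▸ le_sup_left) hne.1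
    have hd : d < a := lt_of_le_of_ne (h ▸ le_sup_right) hne.2
    exact hc.lt.not_ge (h ▸ sup_le (below_c b hb) (below_c d hd))

theorem exists_supIrred_pair_of_card_eq_two [IsStronglyCoatomic L]
    (h : Nat.card {θ : L // ∃! ψ, ψ ⋖ θ} = 2) :
    ∃ α β : L, α ≠ β ∧ SupIrred α ∧ SupIrred β ∧ ∀ θ, SupIrred θ → θ = α ∨ θ = β := by
  obtain ⟨⟨α, hα⟩, ⟨β, hβ⟩, hne, huniv⟩ := Nat.card_eq_two_iff.1 h
  refine ⟨α, β, fun h => hne (Subtype.ext h), supIrred_iff_existsUnique_covBy.2 hα,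
    supIrred_iff_existsUnique_covBy.2 hβ, fun θ hθ => ?_⟩
  have : (⟨θ, supIrred_iff_existsUnique_covBy.1 hθ⟩ : {θ : L // ∃! ψ, ψ ⋖ θ}) ∈
      ({⟨α, hα⟩, ⟨β, hβ⟩} : Set _) := huniv ▸ Set.mem_univ _
  simpa [Subtype.ext_iff] using this

variable [OrderBot L]

theorem IsAtom.supIrred {a : L} (ha : IsAtom a) : SupIrred a := by
  refine ⟨fun h => ha.1 h.eq_bot, fun b c h => ?_⟩
  rcases ha.le_iff.1 (h ▸ le_sup_left : b ≤ a) with rfl | rfl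
  · exact Or.inr (by rwa [bot_sup_eq] at h)
  · exact Or.inl rfl

variable {C U : Set L}

theorem IsAtom.exists_le_of_le_finset_sup (hC : IsChain (· ≤ ·) C) (hU : IsChain (· ≤ ·) U)
    (hCU : {j : L | SupIrred j} ⊆ C ∪ U) {a : L} (ha : IsAtom a) {T : Finset L}
    (hT : ∀ j ∈ T, SupIrred j) (haT : a ≤ T.sup id) : ∃ j ∈ T, a ≤ j := by
  wlog haC : a ∈ C generalizing C U
  · exact this hU hC (Set.union_comm C U ▸ hCU) ((hCU ha.supIrred).resolve_left haC)
  by_cases hTC : ∃ j ∈ T, j ∈ C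
  · obtain ⟨j, hjT, hjC⟩ := hTC
    refine ⟨j, hjT, ?_⟩
    rcases hC.total haC hjC with h | h
    · exact h
    · rcases ha.le_iff.1 h with rfl | rfl
      · exact absurd rfl (hT _ hjT).ne_bot
      · exact le_rfl
  -- Otherwise `T` lies in the chain `U`, so its join is one of its members.
  push Not at hTC
  have hTU : ∀ j ∈ T, j ∈ U := fun j hj => (hCU (hT j hj)).resolve_left (hTC j hj)
  have hTne : T.Nonempty :=
    Finset.nonempty_iff_ne_empty.2 fun h => ha.1 (le_bot_iff.1 (by simpa [h] using haT))
  refine ⟨T.sup' hTne id,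
    Finset.sup'_mem (T : Set L) (fun x hx y hy => ?_) T hTne id fun j hj => hj, ?_⟩
  · rcases hU.total (hTU x hx) (hTU y hy) with h | h
    · rwa [sup_eq_right.2 h]
    · rwa [sup_eq_left.2 h]
  · rwa [Finset.sup'_eq_sup]

theorem IsAtom.supPrime_of_isChain_union [WellFoundedLT L] (hC : IsChain (· ≤ ·) C)
    (hU : IsChain (· ≤ ·) U) (hCU : {j : L | SupIrred j} ⊆ C ∪ U) {a : L} (ha : IsAtom a) :
    SupPrime a := by
  classical
  refine ⟨fun h => ha.1 h.eq_bot, fun {x y} hxy => ?_⟩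
  obtain ⟨s, rfl, hs⟩ := exists_supIrred_decomposition x
  obtain ⟨t, rfl, ht⟩ := exists_supIrred_decomposition y
  rw [← Finset.sup_union] at hxy
  obtain ⟨j, hj, haj⟩ :=
    ha.exists_le_of_le_finset_sup hC hU hCU (Finset.forall_mem_union.2 ⟨hs, ht⟩) hxy
  rcases Finset.mem_union.1 hj with hj | hj
  · exact Or.inl (haj.trans (Finset.le_sup (f := id) hj))
  · exact Or.inr (haj.trans (Finset.le_sup (f := id) hj))

end SupIrred

section CutPoint

variable {L : Type*} [Lattice L] {a : L}

theorem inf_sup_right_of_forall_le_or_le (hcut : ∀ x, x ≤ a ∨ a ≤ x) (x y : L) :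
    x ⊓ y ⊔ a = (x ⊔ a) ⊓ (y ⊔ a) := by
  rcases hcut x with hx | hx
  · rw [sup_eq_right.2 (inf_le_left.trans hx), sup_eq_right.2 hx, inf_eq_left.2 le_sup_right]
  rcases hcut y with hy | hy
  · rw [sup_eq_right.2 (inf_le_right.trans hy), sup_eq_right.2 hy, inf_eq_right.2 le_sup_right]
  · rw [sup_eq_left.2 hx, sup_eq_left.2 hy, sup_eq_left.2 (le_inf hx hy)]

/-- Its kernel collapses `Set.Iic a` and nothing else. -/
def LatticeHom.supRight (a : L) (hcut : ∀ x, x ≤ a ∨ a ≤ x) : LatticeHom L L where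
  toFun x := x ⊔ a
  map_sup' x y := sup_sup_distrib_right x y a
  map_inf' x y := inf_sup_right_of_forall_le_or_le hcut x y

@[simp]
theorem LatticeHom.supRight_apply (hcut : ∀ x, x ≤ a ∨ a ≤ x) (x : L) :
    LatticeHom.supRight a hcut x = x ⊔ a := rfl

theorem sup_cases_of_forall_le_or_le (hcut : ∀ x, x ≤ a ∨ a ≤ x) (x y : L) :
    x ⊔ y ≤ a ∨ x ⊔ y = x ∨ x ⊔ y = y ∨ (a ≤ x ∧ a ≤ y) := by
  rcases hcut x with hx | hx <;> rcases hcut y with hy | hy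
  · exact Or.inl (sup_le hx hy)
  · exact Or.inr (Or.inr (Or.inl (sup_eq_right.2 (hx.trans hy))))
  · exact Or.inr (Or.inl (sup_eq_left.2 (hy.trans hx)))
  · exact Or.inr (Or.inr (Or.inr ⟨hx, hy⟩))

theorem Set.Ici.not_coe_le_of_ne_bot {p : Set.Ici a} (hp : p ≠ ⊥) : ¬(p : L) ≤ a :=
  fun h => hp (Subtype.ext (le_antisymm h p.2))

theorem SupIrred.coe_of_forall_le_or_le (hcut : ∀ x, x ≤ a ∨ a ≤ x) {p : Set.Ici a}
    (hp : SupIrred p) : SupIrred (p : L) := by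
  have hpa := Set.Ici.not_coe_le_of_ne_bot hp.ne_bot
  refine ⟨fun h => hpa (h.eq_of_le p.2).ge, fun x y hxy => ?_⟩
  rcases sup_cases_of_forall_le_or_le hcut x y with h | h | h | ⟨hx, hy⟩
  · exact absurd (hxy ▸ h) hpa
  · exact Or.inl (hxy.symm.trans h).symm
  · exact Or.inr (hxy.symm.trans h).symm
  · exact (hp.2 (show (⟨x, hx⟩ : Set.Ici a) ⊔ ⟨y, hy⟩ = p from Subtype.ext hxy)).imp
      (fun h => congrArg Subtype.val h) (fun h => congrArg Subtype.val h)

theorem SupPrime.coe_of_forall_le_or_le (hcut : ∀ x, x ≤ a ∨ a ≤ x) {p : Set.Ici a}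
    (hp : SupPrime p) : SupPrime (p : L) := by
  have hpa := Set.Ici.not_coe_le_of_ne_bot hp.ne_bot
  refine ⟨fun h => hpa (h.eq_of_le p.2).ge, fun {x y} hxy => ?_⟩
  rcases sup_cases_of_forall_le_or_le hcut x y with h | h | h | ⟨hx, hy⟩
  · exact absurd (hxy.trans h) hpa
  · exact Or.inl (h ▸ hxy)
  · exact Or.inr (h ▸ hxy)
  · exact hp.2 (show p ≤ (⟨x, hx⟩ : Set.Ici a) ⊔ ⟨y, hy⟩ from hxy)

theorem exists_supPrime_gt_of_isChain_union [Finite L] {C U : Set L} (hC : IsChain (· ≤ ·) C)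
    (hU : IsChain (· ≤ ·) U) (hCU : {j : L | SupIrred j} ⊆ C ∪ U)
    (hcut : ∀ x, x ≤ a ∨ a ≤ x) {c : L} (hac : a < c) : ∃ b, a < b ∧ SupPrime b := by
  obtain ⟨p, hp, -⟩ := (eq_bot_or_exists_atom_le (⟨c, hac.le⟩ : Set.Ici a)).resolve_left
    fun h => hac.ne (congrArg Subtype.val h).symm
  have hslim : {j : Set.Ici a | SupIrred j} ⊆ Subtype.val ⁻¹' C ∪ Subtype.val ⁻¹' U :=
    fun j hj => hCU (hj.coe_of_forall_le_or_le hcut)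
  have hprime := hp.supPrime_of_isChain_union
    (hC.preimage _ _ Subtype.val Subtype.val_injective fun _ _ h => h)
    (hU.preimage _ _ Subtype.val Subtype.val_injective fun _ _ h => h) hslim
  exact ⟨p, lt_of_le_not_ge p.2 (Set.Ici.not_coe_le_of_ne_bot hp.1),
    hprime.coe_of_forall_le_or_le hcut⟩

end CutPoint

def SupPrime.leHom {L : Type*} [Lattice L] {j : L} (hj : SupPrime j) : LatticeHom L Prop where
  toFun x := j ≤ x
  map_sup' _ _ := propext hj.le_sup
  map_inf' _ _ := propext le_inf_iff

@[simp]
theorem SupPrime.leHom_apply {L : Type*} [Lattice L] {j : L} (hj : SupPrime j) (x : L) :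
    hj.leHom x = (j ≤ x) := rfl

namespace LatCon

variable {K : Type*} [Lattice K]

@[ext]
theorem ext {θ ψ : LatCon K} (h : ∀ x y, θ.1 x y ↔ ψ.1 x y) : θ = ψ :=
  Subtype.ext (funext₂ fun x y => propext (h x y))

instance : InfSet (LatCon K) where
  sInf S := ⟨fun x y => ∀ θ ∈ S, θ.1 x y,
    ⟨⟨fun x θ _ => θ.2.1.refl x, fun h θ hθ => θ.2.1.symm (h θ hθ),
        fun h h' θ hθ => θ.2.1.trans (h θ hθ) (h' θ hθ)⟩,
      fun a b c d h h' θ hθ => θ.2.2.1 a b c d (h θ hθ) (h' θ hθ),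
      fun a b c d h h' θ hθ => θ.2.2.2 a b c d (h θ hθ) (h' θ hθ)⟩⟩

instance : CompleteLattice (LatCon K) :=
  completeLatticeOfInf _ fun _ =>
    ⟨fun θ hθ _ _ h => h θ hθ, fun _ hψ _ _ h _ hθ => hψ hθ _ _ h⟩

theorem rel_inf {θ ψ : LatCon K} {x y : K} : (θ ⊓ ψ).1 x y ↔ θ.1 x y ∧ ψ.1 x y := by
  change (∀ ρ ∈ ({θ, ψ} : Set (LatCon K)), ρ.1 x y) ↔ _
  simp

theorem rel_bot {x y : K} : (⊥ : LatCon K).1 x y ↔ x = y := by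
  refine ⟨fun h => h ⟨Eq, ⟨⟨fun _ => rfl, Eq.symm, Eq.trans⟩, ?_, ?_⟩⟩ trivial, ?_⟩
  · rintro a b c d rfl rfl; rfl
  · rintro a b c d rfl rfl; rfl
  · rintro rfl; exact (⊥ : LatCon K).2.1.refl x

theorem rel_top {x y : K} : (⊤ : LatCon K).1 x y := fun _ h => h.elim

instance [Finite K] : Finite (LatCon K) :=
  inferInstanceAs (Finite {r : K → K → Prop // IsLatCon r})

instance [Subsingleton K] : Subsingleton (LatCon K) :=
  ⟨fun θ ψ => ext fun x y => by simp only [Subsingleton.elim x y, θ.2.1.refl, ψ.2.1.refl]⟩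

theorem eq_bot_or_eq_top [BoundedOrder K] (hK : ∀ x : K, x = ⊥ ∨ x = ⊤) (θ : LatCon K) :
    θ = ⊥ ∨ θ = ⊤ := by
  have hrel : ∀ x y, θ.1 x y ↔ x = y ∨ θ.1 ⊥ ⊤ := by
    have hθ := θ.2.1
    intro x y
    rcases hK x with rfl | rfl <;> rcases hK y with rfl | rfl
    · simp [hθ.refl]
    · exact ⟨Or.inr, fun h => h.elim (· ▸ hθ.refl _) id⟩
    · exact ⟨fun h => Or.inr (hθ.symm h), fun h => h.elim (· ▸ hθ.refl _) hθ.symm⟩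
    · simp [hθ.refl]
  by_cases h : θ.1 ⊥ ⊤
  · exact Or.inr (ext fun x y => ⟨fun _ => rel_top, fun _ => (hrel x y).2 (Or.inr h)⟩)
  · exact Or.inl (ext fun x y => ((hrel x y).trans (or_iff_left h)).trans rel_bot.symm)

def ker {M : Type*} [Lattice M] (f : LatticeHom K M) : LatCon K :=
  ⟨fun x y => f x = f y, ⟨⟨fun _ => rfl, Eq.symm, Eq.trans⟩,
    fun a b c d h h' => by simp only [map_sup, h, h'],
    fun a b c d h h' => by simp only [map_inf, h, h']⟩⟩

variable {M N : Type*} [Lattice M] [Lattice N]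

theorem not_ker_le_ker {f : LatticeHom K M} {g : LatticeHom K N} {x y : K} (hf : f x = f y)
    (hg : g x ≠ g y) : ¬ker f ≤ ker g :=
  fun h => hg (h x y hf)

theorem eq_of_ker_inf_ker_eq_bot {f : LatticeHom K M} {g : LatticeHom K N}
    (h : ker f ⊓ ker g = ⊥) {x y : K} (hf : f x = f y) (hg : g x = g y) : x = y :=
  rel_bot.1 (h ▸ rel_inf.2 ⟨hf, hg⟩)

end LatCon

section FourElement

variable {L : Type*} [Lattice L] [OrderBot L] {x y : L}

theorem forall_eq_bot_or_eq_or_eq_or_eq_sup [WellFoundedLT L] {α β : L}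
    (h : ∀ z, SupIrred z → z = α ∨ z = β) (z : L) : z = ⊥ ∨ z = α ∨ z = β ∨ z = α ⊔ β := by
  classical
  obtain ⟨s, rfl, hs⟩ := exists_supIrred_decomposition z
  have hsub : (s : Set L) ⊆ {α, β} := Set.subset_pair_iff.2 fun j hj => h j (hs hj)
  rcases Set.subset_pair_iff_eq.1 hsub with h' | h' | h' | h'
  · simp [Finset.coe_eq_empty.1 h']
  · simp [Finset.coe_eq_singleton.1 h']
  · simp [Finset.coe_eq_singleton.1 h']
  · simp [Finset.coe_eq_pair.1 h']

theorem forall_eq_bot_or_eq_or_eq_or_eq_sup_of_not_le {α β : L}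
    (h : ∀ z : L, z = ⊥ ∨ z = α ∨ z = β ∨ z = α ⊔ β) (hxy : ¬x ≤ y) (hyx : ¬y ≤ x) (z : L) :
    z = ⊥ ∨ z = x ∨ z = y ∨ z = x ⊔ y := by
  have le_top : ∀ z, z ≤ α ⊔ β := fun z => by
    rcases h z with rfl | rfl | rfl | rfl
    exacts [bot_le, le_sup_left, le_sup_right, le_rfl]
  have mem : ∀ {x y : L}, ¬x ≤ y → ¬y ≤ x → x = α ∨ x = β := fun {x y} hxy hyx => by
    rcases h x with rfl | rfl | rfl | rfl
    exacts [absurd bot_le hxy, Or.inl rfl, Or.inr rfl, absurd (le_top y) hyx]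
  rcases mem hxy hyx with rfl | rfl <;> rcases mem hyx hxy with rfl | rfl
  · exact absurd le_rfl hxy
  · exact h z
  · rcases h z with h' | h' | h' | h'
    · exact Or.inl h'
    · exact Or.inr (Or.inr (Or.inl h'))
    · exact Or.inr (Or.inl h')
    · exact Or.inr (Or.inr (Or.inr (h'.trans (sup_comm _ _))))
  · exact absurd le_rfl hxy

variable (hL : ∀ z : L, z = ⊥ ∨ z = x ∨ z = y ∨ z = x ⊔ y) (hxy : ¬x ≤ y) (hyx : ¬y ≤ x)
include hL hxy hyx

theorem isAtom_of_forall_eq_bot_or_eq_or_eq_or_eq_sup : IsAtom y := by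
  refine ⟨fun h => hyx (h ▸ bot_le), fun z hz => ?_⟩
  rcases hL z with rfl | rfl | rfl | rfl
  · rfl
  · exact absurd hz.le hxy
  · exact absurd hz (lt_irrefl _)
  · exact absurd (le_sup_left.trans hz.le) hxy

theorem nonempty_orderIso_set_fin_two : Nonempty (L ≃o Set (Fin 2)) := by
  let t : Fin 2 → L := ![x, y]
  have hx : x ≠ ⊥ := fun h => hxy (h ▸ bot_le)
  have hy : y ≠ ⊥ := fun h => hyx (h ▸ bot_le)
  let g : L ↪o Set (Fin 2) := OrderEmbedding.ofMapLEIff (fun z => {i | t i ≤ z}) fun z w => by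
    refine ⟨fun h => ?_, fun h i hi => le_trans hi h⟩
    have h0 : x ≤ z → x ≤ w := @h 0
    have h1 : y ≤ z → y ≤ w := @h 1
    rcases hL z with rfl | rfl | rfl | rfl
    exacts [bot_le, h0 le_rfl, h1 le_rfl, sup_le (h0 le_sup_left) (h1 le_sup_right)]
  refine ⟨OrderIso.ofSurjective g fun s => ?_⟩
  have key : ∀ z, (x ≤ z ↔ (0 : Fin 2) ∈ s) → (y ≤ z ↔ (1 : Fin 2) ∈ s) → g z = s :=
    fun z h0 h1 => Set.ext fun i => by fin_cases i <;> assumption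
  by_cases h0 : (0 : Fin 2) ∈ s <;> by_cases h1 : (1 : Fin 2) ∈ s
  · exact ⟨x ⊔ y, key _ (iff_of_true le_sup_left h0) (iff_of_true le_sup_right h1)⟩
  · exact ⟨x, key _ (iff_of_true le_rfl h0) (iff_of_false hyx h1)⟩
  · exact ⟨y, key _ (iff_of_false hxy h0) (iff_of_true le_rfl h1)⟩
  · exact ⟨⊥, key _ (iff_of_false (fun h => hx (le_bot_iff.1 h)) h0)
      (iff_of_false (fun h => hy (le_bot_iff.1 h)) h1)⟩

end FourElement

theorem nonempty_orderIso_fin_three {L : Type*} [PartialOrder L] {x₀ x₁ x₂ : L}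
    (hL : ∀ z : L, z = x₀ ∨ z = x₁ ∨ z = x₂) (h₀₁ : x₀ < x₁) (h₁₂ : x₁ < x₂) :
    Nonempty (L ≃o Fin 3) := by
  have hmono : StrictMono ![x₀, x₁, x₂] := Fin.strictMono_iff_lt_succ.2 fun i => by
    fin_cases i
    exacts [h₀₁, h₁₂]
  refine ⟨(hmono.orderIsoOfSurjective _ fun z => ?_).symm⟩
  rcases hL z with rfl | rfl | rfl
  exacts [⟨0, rfl⟩, ⟨1, rfl⟩, ⟨2, rfl⟩]

section AtomCases

variable {K : Type*} [Lattice K] {α β : LatCon K}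

theorem nonempty_orderIso_of_supPrime_atoms [OrderBot K] {a b : K} (ha : IsAtom a)
    (hb : IsAtom b) (hab : a ≠ b) (hpa : SupPrime a) (hpb : SupPrime b)
    (hcon : ∀ θ : LatCon K, θ = ⊥ ∨ θ = α ∨ θ = β ∨ θ = α ⊔ β) :
    Nonempty (LatCon K ≃o Set (Fin 2)) ∧ Nonempty (K ≃o Set (Fin 2)) := by
  have hnab : ¬a ≤ b := fun h => hab ((hb.le_iff_eq ha.1).1 h)
  have hnba : ¬b ≤ a := fun h => hab ((ha.le_iff_eq hb.1).1 h).symm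
  have h₁ : ¬LatCon.ker hpa.leHom ≤ LatCon.ker hpb.leHom :=
    LatCon.not_ker_le_ker (x := ⊥) (y := b) (by simp [ha.1, hnab]) (by simp [hb.1])
  have h₂ : ¬LatCon.ker hpb.leHom ≤ LatCon.ker hpa.leHom :=
    LatCon.not_ker_le_ker (x := ⊥) (y := a) (by simp [hb.1, hnba]) (by simp [ha.1])
  have hcon' := forall_eq_bot_or_eq_or_eq_or_eq_sup_of_not_le hcon h₁ h₂
  refine ⟨nonempty_orderIso_set_fin_two hcon' h₁ h₂, ?_⟩
  have hinf := ((isAtom_of_forall_eq_bot_or_eq_or_eq_or_eq_sup hcon' h₁ h₂).le_iff.1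
    inf_le_right).resolve_right fun h => h₂ (h.ge.trans inf_le_left)
  have hK : ∀ x : K, x = ⊥ ∨ x = a ∨ x = b ∨ x = a ⊔ b := fun x => by
    by_cases hax : a ≤ x <;> by_cases hbx : b ≤ x
    · exact Or.inr (Or.inr (Or.inr (LatCon.eq_of_ker_inf_ker_eq_bot hinf
        (by simp [hax]) (by simp [hbx]))))
    · exact Or.inr (Or.inl (LatCon.eq_of_ker_inf_ker_eq_bot hinf
        (by simp [hax]) (by simp [hbx, hnba])))
    · exact Or.inr (Or.inr (Or.inl (LatCon.eq_of_ker_inf_ker_eq_bot hinf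
        (by simp [hax, hnab]) (by simp [hbx]))))
    · exact Or.inl (LatCon.eq_of_ker_inf_ker_eq_bot hinf
        (by simp [hax, ha.1]) (by simp [hbx, hb.1]))
  exact nonempty_orderIso_set_fin_two hK hnab hnba

theorem nonempty_orderIso_of_supPrime_unique_atom [Finite K] [BoundedOrder K] {C U : Set K}
    (hC : IsChain (· ≤ ·) C) (hU : IsChain (· ≤ ·) U) (hCU : {j : K | SupIrred j} ⊆ C ∪ U)
    {a : K} (ha : IsAtom a) (hpa : SupPrime a) (hK : ∀ x, x = ⊥ ∨ a ≤ x)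
    (htwo : ¬∀ x : K, x = ⊥ ∨ x = ⊤)
    (hcon : ∀ θ : LatCon K, θ = ⊥ ∨ θ = α ∨ θ = β ∨ θ = α ⊔ β) :
    Nonempty (LatCon K ≃o Set (Fin 2)) ∧ Nonempty (K ≃o Fin 3) := by
  have htop : a < ⊤ := lt_top_iff_ne_top.2 fun h =>
    htwo fun x => (hK x).imp_right fun hx => top_le_iff.1 (h ▸ hx)
  have hcut : ∀ x, x ≤ a ∨ a ≤ x := fun x => (hK x).imp (fun hx => hx.le.trans bot_le) id
  have h₁ : ¬LatCon.ker (LatticeHom.supRight a hcut) ≤ LatCon.ker hpa.leHom :=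
    LatCon.not_ker_le_ker (x := ⊥) (y := a) (by simp) (by simp [ha.1])
  have h₂ : ¬LatCon.ker hpa.leHom ≤ LatCon.ker (LatticeHom.supRight a hcut) :=
    LatCon.not_ker_le_ker (x := a) (y := ⊤) (by simp) (by simp [htop.ne])
  have hcon' := forall_eq_bot_or_eq_or_eq_or_eq_sup_of_not_le hcon h₁ h₂
  refine ⟨nonempty_orderIso_set_fin_two hcon' h₁ h₂, ?_⟩
  obtain ⟨a₂, haa₂, hpa₂⟩ := exists_supPrime_gt_of_isChain_union hC hU hCU hcut htop
  have hinf : LatCon.ker hpa.leHom ⊓ LatCon.ker hpa₂.leHom = ⊥ :=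
    ((isAtom_of_forall_eq_bot_or_eq_or_eq_or_eq_sup hcon' h₁ h₂).le_iff.1
      inf_le_left).resolve_right fun h => LatCon.not_ker_le_ker (x := a) (y := a₂)
        (by simp [haa₂.le]) (by simp [haa₂.not_ge]) (h.ge.trans inf_le_right)
  have hK₃ : ∀ x : K, x = ⊥ ∨ x = a ∨ x = ⊤ := fun x => by
    refine (hK x).imp_right fun hax => ?_
    by_cases ha₂x : a₂ ≤ x
    · exact Or.inr (LatCon.eq_of_ker_inf_ker_eq_bot hinf (by simp [hax]) (by simp [ha₂x]))
    · exact Or.inl (LatCon.eq_of_ker_inf_ker_eq_bot hinf (by simp [hax])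
        (by simp [ha₂x, haa₂.not_ge]))
  exact nonempty_orderIso_fin_three hK₃ ha.bot_lt htop

end AtomCases

theorem slim_semimodular_two_ji_congruences_general {K : Type*} [Lattice K] [Fintype K]
    (hslim : ∃ C U : Set K, IsChain (· ≤ ·) C ∧ IsChain (· ≤ ·) U ∧
      {a : K | SupIrred a} = C ∪ U)
    (hji : Nat.card {θ : LatCon K // ∃! ψ : LatCon K, ψ ⋖ θ} = 2) :
    Nonempty (LatCon K ≃o Set (Fin 2)) ∧
      (Nonempty (K ≃o Fin 3) ∨ Nonempty (K ≃o Set (Fin 2))) := by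
  obtain ⟨C, U, hC, hU, hCU⟩ := hslim
  obtain ⟨α, β, hαβ, hα, hβ, hirr⟩ := exists_supIrred_pair_of_card_eq_two hji
  have hcon := forall_eq_bot_or_eq_or_eq_or_eq_sup hirr
  have : Nontrivial K := not_subsingleton_iff_nontrivial.1 fun _ => hαβ (Subsingleton.elim α β)
  let := Fintype.toBoundedOrder K
  have htwo : ¬∀ x : K, x = ⊥ ∨ x = ⊤ := fun hK => hαβ <| by
    rw [(LatCon.eq_bot_or_eq_top hK α).resolve_left hα.ne_bot,
      (LatCon.eq_bot_or_eq_top hK β).resolve_left hβ.ne_bot]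
  obtain ⟨a, ha, -⟩ := (eq_bot_or_exists_atom_le (⊤ : K)).resolve_left top_ne_bot
  have hpa := ha.supPrime_of_isChain_union hC hU hCU.subset
  by_cases huniq : ∀ x : K, x = ⊥ ∨ a ≤ x
  · exact (nonempty_orderIso_of_supPrime_unique_atom hC hU hCU.subset ha hpa huniq htwo
      hcon).imp_right Or.inl
  · push Not at huniq
    obtain ⟨x, hx, hax⟩ := huniq
    obtain ⟨b, hb, hbx⟩ := (eq_bot_or_exists_atom_le x).resolve_left hx
    exact (nonempty_orderIso_of_supPrime_atoms ha hb (by rintro rfl; exact hax hbx) hpa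
      (hb.supPrime_of_isChain_union hC hU hCU.subset) hcon).imp_right Or.inr

/-- A slim semimodular lattice with exactly two join-irreducible congruences has the
four-element Boolean congruence lattice and is either the three-element chain or the
four-element Boolean lattice. -/
theorem slim_semimodular_two_ji_congruences {K : Type*} [Lattice K] [Fintype K]
    (hsm : ∀ x y : K, x ⊓ y ⋖ x → y ⋖ x ⊔ y)
    (hslim : ∃ C U : Set K, IsChain (· ≤ ·) C ∧ IsChain (· ≤ ·) U ∧
      {a : K | SupIrred a} = C ∪ U)
    (hji : Nat.card {θ : LatCon K // ∃! ψ : LatCon K, ψ ⋖ θ} = 2) :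
    Nonempty (LatCon K ≃o Set (Fin 2)) ∧
      (Nonempty (K ≃o Fin 3) ∨ Nonempty (K ≃o Set (Fin 2))) :=
  slim_semimodular_two_ji_congruences_general hslim hji
end
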